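/- arXiv:1505.07906 — 2 statements merged into one kernel-verified Lean document; each statement's English description precedes it below -/
import Mathlib

section
/- For every bounded measurable function a : [0,∞) → ℂ, the eigenvalue sequence γ_a(n) = (1/n!)·∫_0^∞ a(√r)·e^{-r}·r^n dr is Lipschitz continuous with respect to the square-root metric ρ(m,n) = |√m − √n| on ℤ≥0; in particular γ_a is bounded and uniformly continuous with respect to ρ. -/
/-!
Write `w n r = e^{-r} r^n / n!` for the density of the Gamma(n+1) distribution, so that
`γ_a(n) = ∫ a(√r) w n r dr`. Then `w (n+1) - w n = w n · (r - (n+1)) / (n+1)`, and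
`|γ_a(n+1) - γ_a(n)|` is at most `‖a‖_∞ / (n+1)` times the mean absolute deviation of Gamma(n+1).
That deviation is at most the standard deviation `√(n+1)`; here this is seen through
`|x| ≤ x²/(2s) + s/2` with `s = √(n+1)`, integrated against `w n`. So
`|γ_a(n+1) - γ_a(n)| ≤ ‖a‖_∞ / √(n+1) ≤ 2‖a‖_∞ (√(n+1) - √n)`, and telescoping gives the
Lipschitz bound for `ρ(m,n) = |√m - √n|`. Boundedness holds because `w n` is a probability density.
-/

open MeasureTheory Set Real
open scoped Nat

lemma integrableOn_exp_neg_mul_pow (n : ℕ) :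
    IntegrableOn (fun r : ℝ => exp (-r) * r ^ n) (Ioi 0) := by
  simpa [Real.rpow_natCast] using GammaIntegral_convergent (s := (n : ℝ) + 1) (by positivity)

lemma integral_exp_neg_mul_pow (n : ℕ) :
    ∫ r in Ioi (0 : ℝ), exp (-r) * r ^ n = n ! := by
  have h := Gamma_nat_eq_factorial n
  rw [Gamma_eq_integral (by positivity)] at h
  simpa [Real.rpow_natCast] using h

lemma exp_neg_mul_pow_mul_sq_sub (k : ℕ) (c r : ℝ) :
    exp (-r) * r ^ k * (r - c) ^ 2 =
      exp (-r) * r ^ (k + 2) - 2 * c * (exp (-r) * r ^ (k + 1)) + c ^ 2 * (exp (-r) * r ^ k) := by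
  ring

lemma integrableOn_exp_neg_mul_pow_mul_sq_sub (k : ℕ) (c : ℝ) :
    IntegrableOn (fun r : ℝ => exp (-r) * r ^ k * (r - c) ^ 2) (Ioi 0) := by
  simp_rw [exp_neg_mul_pow_mul_sq_sub]
  exact ((integrableOn_exp_neg_mul_pow _).sub ((integrableOn_exp_neg_mul_pow _).const_mul _)).add
    ((integrableOn_exp_neg_mul_pow _).const_mul _)

lemma integral_exp_neg_mul_pow_mul_sq_sub_succ (k : ℕ) :
    ∫ r in Ioi (0 : ℝ), exp (-r) * r ^ k * (r - (k + 1)) ^ 2 = ((k : ℝ) + 1) * k ! := by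
  simp_rw [exp_neg_mul_pow_mul_sq_sub]
  rw [integral_add ?_ ?_, integral_sub ?_ ?_, integral_const_mul, integral_const_mul,
    integral_exp_neg_mul_pow, integral_exp_neg_mul_pow, integral_exp_neg_mul_pow]
  · push_cast [Nat.factorial_succ]
    ring
  all_goals first
    | exact integrableOn_exp_neg_mul_pow _
    | exact (integrableOn_exp_neg_mul_pow _).const_mul _
    | exact (integrableOn_exp_neg_mul_pow _).sub ((integrableOn_exp_neg_mul_pow _).const_mul _)

lemma integrableOn_exp_neg_mul_pow_mul_abs_sub (k : ℕ) (c : ℝ) :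
    IntegrableOn (fun r : ℝ => exp (-r) * r ^ k * |r - c|) (Ioi 0) := by
  refine Integrable.mono' ((integrableOn_exp_neg_mul_pow_mul_sq_sub k c).add
    (integrableOn_exp_neg_mul_pow k)) (by fun_prop) ?_
  filter_upwards [ae_restrict_mem measurableSet_Ioi] with r (hr : 0 < r)
  have habs : |r - c| ≤ (r - c) ^ 2 + 1 := by nlinarith [sq_abs (r - c), sq_nonneg (|r - c| - 1)]
  rw [norm_of_nonneg (by positivity)]
  calc exp (-r) * r ^ k * |r - c| ≤ exp (-r) * r ^ k * ((r - c) ^ 2 + 1) := by gcongr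
    _ = exp (-r) * r ^ k * (r - c) ^ 2 + exp (-r) * r ^ k := by ring

lemma integral_exp_neg_mul_pow_mul_abs_sub_succ_le (k : ℕ) :
    ∫ r in Ioi (0 : ℝ), exp (-r) * r ^ k * |r - (k + 1)| ≤ √((k : ℝ) + 1) * k ! := by
  set s := √((k : ℝ) + 1)
  have hs : 0 < s := sqrt_pos.mpr (by positivity)
  have hs2 : s ^ 2 = k + 1 := sq_sqrt (by positivity)
  have amgm : ∀ x : ℝ, |x| ≤ (2 * s)⁻¹ * x ^ 2 + s / 2 := fun x => by
    rw [← sq_abs x]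
    field_simp
    nlinarith [sq_nonneg (|x| - s)]
  calc ∫ r in Ioi (0 : ℝ), exp (-r) * r ^ k * |r - (k + 1)|
      ≤ ∫ r in Ioi (0 : ℝ), (2 * s)⁻¹ * (exp (-r) * r ^ k * (r - (k + 1)) ^ 2)
          + s / 2 * (exp (-r) * r ^ k) := by
        refine setIntegral_mono_on (integrableOn_exp_neg_mul_pow_mul_abs_sub _ _)
          (((integrableOn_exp_neg_mul_pow_mul_sq_sub _ _).const_mul _).add
            ((integrableOn_exp_neg_mul_pow _).const_mul _)) measurableSet_Ioi fun r (hr : 0 < r) => ?_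
        calc exp (-r) * r ^ k * |r - (k + 1)|
            ≤ exp (-r) * r ^ k * ((2 * s)⁻¹ * (r - (k + 1)) ^ 2 + s / 2) := by gcongr; exact amgm _
          _ = _ := by ring
    _ = (2 * s)⁻¹ * ((k + 1) * k !) + s / 2 * k ! := by
        rw [integral_add ((integrableOn_exp_neg_mul_pow_mul_sq_sub _ _).const_mul _)
            ((integrableOn_exp_neg_mul_pow _).const_mul _), integral_const_mul, integral_const_mul,
          integral_exp_neg_mul_pow_mul_sq_sub_succ, integral_exp_neg_mul_pow]
    _ = s * k ! := by
        rw [← hs2]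
        field_simp
        ring

lemma dist_le_abs_sub_of_dist_succ_le {X : Type*} [PseudoMetricSpace X] {f : ℕ → X} {g : ℕ → ℝ}
    (h : ∀ k, dist (f k) (f (k + 1)) ≤ g (k + 1) - g k) (m n : ℕ) :
    dist (f m) (f n) ≤ |g m - g n| := by
  wlog hmn : m ≤ n generalizing m n
  · rw [dist_comm, abs_sub_comm]
    exact this n m (le_of_not_ge hmn)
  calc dist (f m) (f n) ≤ ∑ i ∈ Finset.Ico m n, (g (i + 1) - g i) :=
        dist_le_Ico_sum_of_dist_le hmn fun _ _ => h _
    _ = g n - g m := Finset.sum_Ico_sub g hmn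
    _ ≤ |g m - g n| := abs_sub_comm (g m) (g n) ▸ le_abs_self _

lemma inv_sqrt_add_one_le_two_mul_sqrt_add_one_sub_sqrt {x : ℝ} (hx : 0 ≤ x) :
    (√(x + 1))⁻¹ ≤ 2 * (√(x + 1) - √x) := by
  have hs : 0 < √(x + 1) := sqrt_pos.mpr (by positivity)
  have hs2 : √(x + 1) ^ 2 = x + 1 := sq_sqrt (by positivity)
  have ht2 : √x ^ 2 = x := sq_sqrt hx
  rw [inv_le_iff_one_le_mul₀ hs]
  nlinarith [sq_nonneg (√(x + 1) - √x)]

lemma dist_le_mul_abs_sqrt_sub_of_dist_succ_le {X : Type*} [PseudoMetricSpace X] {f : ℕ → X}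
    {L : ℝ} (hL : 0 ≤ L) (h : ∀ k : ℕ, dist (f k) (f (k + 1)) ≤ L / √((k : ℝ) + 1)) (m n : ℕ) :
    dist (f m) (f n) ≤ 2 * L * |√(m : ℝ) - √(n : ℝ)| := by
  have step : ∀ k : ℕ, dist (f k) (f (k + 1)) ≤ 2 * L * √((k + 1 : ℕ) : ℝ) - 2 * L * √(k : ℝ) := by
    intro k
    calc dist (f k) (f (k + 1)) ≤ L * (√((k : ℝ) + 1))⁻¹ := h k
      _ ≤ L * (2 * (√((k : ℝ) + 1) - √(k : ℝ))) :=
        mul_le_mul_of_nonneg_left (inv_sqrt_add_one_le_two_mul_sqrt_add_one_sub_sqrt k.cast_nonneg) hL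
      _ = _ := by push_cast; ring
  have := dist_le_abs_sub_of_dist_succ_le (g := fun k : ℕ => 2 * L * √(k : ℝ)) step m n
  rwa [← mul_sub, abs_mul, abs_of_nonneg (by positivity)] at this

noncomputable def radialEigenvalue (a : ℝ → ℂ) (n : ℕ) : ℂ :=
  (n ! : ℂ)⁻¹ * ∫ r in Ioi (0 : ℝ), a (√r) * ((exp (-r) * r ^ n : ℝ) : ℂ)

section radialEigenvalue

variable {a : ℝ → ℂ} {C : ℝ}

lemma integrableOn_comp_sqrt_mul_ofReal (hm : Measurable a) (hC : ∀ r, 0 ≤ r → ‖a r‖ ≤ C)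
    {f : ℝ → ℝ} (hf : IntegrableOn f (Ioi 0)) :
    IntegrableOn (fun r => a (√r) * (f r : ℂ)) (Ioi 0) :=
  hf.ofReal.bdd_mul (hm.comp Real.continuous_sqrt.measurable).aestronglyMeasurable
    (Filter.Eventually.of_forall fun r => hC _ (sqrt_nonneg r))

lemma radialEigenvalue_succ_sub (hm : Measurable a) (hC : ∀ r, 0 ≤ r → ‖a r‖ ≤ C) (k : ℕ) :
    radialEigenvalue a (k + 1) - radialEigenvalue a k =
      ∫ r in Ioi (0 : ℝ), a (√r) * ((exp (-r) * r ^ k * (r - (k + 1)) / (k + 1)! : ℝ) : ℂ) := by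
  unfold radialEigenvalue
  rw [← integral_const_mul, ← integral_const_mul,
    ← integral_sub ((integrableOn_comp_sqrt_mul_ofReal hm hC (integrableOn_exp_neg_mul_pow _)).const_mul _)
      ((integrableOn_comp_sqrt_mul_ofReal hm hC (integrableOn_exp_neg_mul_pow _)).const_mul _)]
  refine setIntegral_congr_fun measurableSet_Ioi fun r _ => ?_
  have hk : (k ! : ℂ) ≠ 0 := by exact_mod_cast k.factorial_ne_zero
  push_cast [Nat.factorial_succ]
  field_simp
  ring

lemma norm_radialEigenvalue_succ_sub_le (hm : Measurable a) (hC : ∀ r, 0 ≤ r → ‖a r‖ ≤ C)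
    (k : ℕ) : ‖radialEigenvalue a (k + 1) - radialEigenvalue a k‖ ≤ C / √((k : ℝ) + 1) := by
  have hC0 : 0 ≤ C := (norm_nonneg _).trans (hC 0 le_rfl)
  have hs : 0 < √((k : ℝ) + 1) := sqrt_pos.mpr (by positivity)
  have hs2 : √((k : ℝ) + 1) ^ 2 = k + 1 := sq_sqrt (by positivity)
  rw [radialEigenvalue_succ_sub hm hC]
  calc _ ≤ ∫ r in Ioi (0 : ℝ), C / (k + 1)! * (exp (-r) * r ^ k * |r - (k + 1)|) := by
        refine norm_integral_le_of_norm_le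
          ((integrableOn_exp_neg_mul_pow_mul_abs_sub _ _).const_mul _) ?_
        filter_upwards [ae_restrict_mem measurableSet_Ioi] with r (hr : 0 < r)
        rw [norm_mul, Complex.norm_real, Real.norm_eq_abs]
        simp only [abs_div, abs_mul, abs_of_pos (exp_pos _), abs_of_pos (pow_pos hr k), Nat.abs_cast]
        calc _ ≤ C * (exp (-r) * r ^ k * |r - (k + 1)| / (k + 1)!) := by
              gcongr
              exact hC _ (sqrt_nonneg r)
          _ = _ := by ring
    _ ≤ C / (k + 1)! * (√((k : ℝ) + 1) * k !) := by
        rw [integral_const_mul]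
        gcongr
        exact integral_exp_neg_mul_pow_mul_abs_sub_succ_le k
    _ = C / √((k : ℝ) + 1) := by
        push_cast [Nat.factorial_succ]
        field_simp
        rw [hs2]

lemma norm_radialEigenvalue_le (hC : ∀ r, 0 ≤ r → ‖a r‖ ≤ C) (n : ℕ) :
    ‖radialEigenvalue a n‖ ≤ C := by
  have hn : (0 : ℝ) < n ! := by positivity
  have hint : ‖∫ r in Ioi (0 : ℝ), a (√r) * ((exp (-r) * r ^ n : ℝ) : ℂ)‖ ≤ C * n ! := by
    rw [← integral_exp_neg_mul_pow, ← integral_const_mul]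
    refine norm_integral_le_of_norm_le ((integrableOn_exp_neg_mul_pow n).const_mul C) ?_
    filter_upwards [ae_restrict_mem measurableSet_Ioi] with r (hr : 0 < r)
    rw [norm_mul, Complex.norm_real, norm_of_nonneg (by positivity)]
    gcongr
    exact hC _ (sqrt_nonneg r)
  rw [radialEigenvalue, norm_mul, norm_inv, Complex.norm_natCast, inv_mul_le_iff₀ hn, mul_comm]
  exact hint

end radialEigenvalue

theorem stmt_11 (a : ℝ → ℂ) (hm : Measurable a)
    (hb : ∃ C : ℝ, ∀ r : ℝ, 0 ≤ r → ‖a r‖ ≤ C)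
    (γ : ℕ → ℂ)
    (hγ : ∀ k : ℕ, γ k = (Nat.factorial k : ℂ)⁻¹ *
      ∫ r in Set.Ioi (0 : ℝ), a (Real.sqrt r) * ((Real.exp (-r) * r ^ k : ℝ) : ℂ)) :
    (∃ C : ℝ, ∀ m n : ℕ,
      ‖γ m - γ n‖ ≤ C * |Real.sqrt m - Real.sqrt n|) ∧
    (∃ D : ℝ, ∀ n : ℕ, ‖γ n‖ ≤ D) ∧
    (∀ ε > (0 : ℝ), ∃ δ > (0 : ℝ), ∀ m n : ℕ,
      |Real.sqrt m - Real.sqrt n| ≤ δ → ‖γ m - γ n‖ ≤ ε) := by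
  obtain ⟨C, hC⟩ := hb
  have hC0 : 0 ≤ C := (norm_nonneg _).trans (hC 0 le_rfl)
  obtain rfl : γ = radialEigenvalue a := funext hγ
  have hlip : ∀ m n : ℕ, ‖radialEigenvalue a m - radialEigenvalue a n‖ ≤ 2 * C * |√m - √n| := by
    intro m n
    rw [← dist_eq_norm]
    refine dist_le_mul_abs_sqrt_sub_of_dist_succ_le hC0 (fun k => ?_) m n
    rw [dist_comm, dist_eq_norm]
    exact norm_radialEigenvalue_succ_sub_le hm hC k
  refine ⟨⟨2 * C, hlip⟩, ⟨C, norm_radialEigenvalue_le hC⟩, fun ε hε =>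
    ⟨ε / (2 * C + 1), by positivity, fun m n hmn => ?_⟩⟩
  calc _ ≤ 2 * C * |√m - √n| := hlip m n
    _ ≤ 2 * C * (ε / (2 * C + 1)) := by gcongr
    _ ≤ ε := by
        rw [mul_div_assoc', div_le_iff₀ (by positivity)]
        nlinarith
end

section
/- Define F(x,y) = exp((2x²+1)(ln y − ln x) + x² − y²). Then lim_{x → ∞} ∫_0^∞ |F(x,y) − e^{−2(x−y)²}| dy = 0. -/
/-!
Substitute `y = x + t`. Expanding `log (1 + t / x)` to second order shows that the exponent of
`F x (x + t)` tends to `-2 t²` for each fixed `t`. For `x ≥ 1` the exponent is at most `-2 t²`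
when `t ≤ 0` (from `log (1 - w) ≤ -w - w² / 2`) and at most `t - t²` when `t ≥ 0` (from
`log v ≤ v - 1`), so dominated convergence applies with the integrable bound
`2 exp (-2 t²) + exp (t - t²)`.
-/

open Real MeasureTheory Filter Set Topology

theorem Real.log_one_sub_le_neg_sub_sq_div_two {w : ℝ} (hw₀ : 0 ≤ w) (hw₁ : w < 1) :
    log (1 - w) ≤ -w - w ^ 2 / 2 := by
  have hsum := sum_le_hasSum (Finset.range 2) (fun n _ ↦ by positivity)
    (hasSum_pow_div_log_of_abs_lt_one (abs_lt.2 ⟨by linarith, hw₁⟩))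
  norm_num [Finset.sum_range_succ] at hsum
  linarith

theorem Real.abs_log_one_add_sub_le {u : ℝ} (hu : |u| ≤ 1 / 2) :
    |log (1 + u) - (u - u ^ 2 / 2)| ≤ 2 * |u| ^ 3 := by
  have htaylor := abs_log_sub_add_sum_range_le (x := -u) (by rw [abs_neg]; linarith) 2
  norm_num [Finset.sum_range_succ] at htaylor
  calc |log (1 + u) - (u - u ^ 2 / 2)| = |-u + u ^ 2 / 2 + log (1 + u)| := by ring_nf
    _ ≤ |u| ^ 3 / (1 - |u|) := htaylor
    _ ≤ 2 * |u| ^ 3 := by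
      rw [div_le_iff₀ (by linarith)]
      nlinarith [pow_nonneg (abs_nonneg u) 3]

noncomputable def stirlingExponent (x y : ℝ) : ℝ :=
  (2 * x ^ 2 + 1) * (log y - log x) + x ^ 2 - y ^ 2

theorem stirlingExponent_le_of_le {x y : ℝ} (hy : 0 < y) (hyx : y ≤ x) :
    stirlingExponent x y ≤ -2 * (x - y) ^ 2 := by
  have hx : 0 < x := hy.trans_le hyx
  have hlog : log y - log x = log (1 - (x - y) / x) := by
    rw [← log_div hy.ne' hx.ne']
    congr 1
    field_simp
    ring
  have hquad := log_one_sub_le_neg_sub_sq_div_two (w := (x - y) / x) (by positivity)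
    (by rw [div_lt_one hx]; linarith)
  have hnonpos : log y - log x ≤ 0 := sub_nonpos.2 (log_le_log hy hyx)
  have hmain : 2 * x ^ 2 * (log y - log x) ≤ -2 * x * (x - y) - (x - y) ^ 2 := by
    rw [hlog]
    calc 2 * x ^ 2 * log (1 - (x - y) / x)
        ≤ 2 * x ^ 2 * (-((x - y) / x) - ((x - y) / x) ^ 2 / 2) := by gcongr
      _ = -2 * x * (x - y) - (x - y) ^ 2 := by field_simp
  unfold stirlingExponent
  nlinarith

theorem stirlingExponent_le_of_ge {x y : ℝ} (hx : 1 ≤ x) (hxy : x ≤ y) :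
    stirlingExponent x y ≤ (y - x) - (y - x) ^ 2 := by
  have hx₀ : 0 < x := one_pos.trans_le hx
  have hy₀ : 0 < y := hx₀.trans_le hxy
  have hlin : x * (log y - log x) ≤ y - x := by
    have := log_le_sub_one_of_pos (div_pos hy₀ hx₀)
    rw [log_div hy₀.ne' hx₀.ne', le_sub_iff_add_le, le_div_iff₀ hx₀] at this
    linarith
  have hnonneg : 0 ≤ log y - log x := sub_nonneg.2 (log_le_log hx₀ hxy)
  have hlog : log y - log x ≤ y - x := by nlinarith
  have hquad : x * (x * (log y - log x)) ≤ x * (y - x) := mul_le_mul_of_nonneg_left hlin hx₀.le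
  unfold stirlingExponent
  nlinarith

theorem abs_stirlingExponent_add_le {x t : ℝ} (hx : 1 ≤ x) (ht : 2 * |t| ≤ x) :
    |stirlingExponent x (x + t) + 2 * t ^ 2| ≤ (|t| + t ^ 2 + 6 * |t| ^ 3) / x := by
  have hx₀ : 0 < x := one_pos.trans_le hx
  have hxt : 0 < x + t := by linarith [neg_abs_le t, abs_nonneg t]
  obtain ⟨u, hu⟩ : ∃ u, u = t / x := ⟨_, rfl⟩
  have hu_abs : |u| = |t| / x := by rw [hu, abs_div, abs_of_pos hx₀]
  have hu_half : |u| ≤ 1 / 2 := by rw [hu_abs, div_le_iff₀ hx₀]; linarith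
  have hexpand : stirlingExponent x (x + t) + 2 * t ^ 2
      = u - u ^ 2 / 2 + (2 * x ^ 2 + 1) * (log (1 + u) - (u - u ^ 2 / 2)) := by
    have hlog : log (x + t) - log x = log (1 + u) := by
      rw [← log_div hxt.ne' hx₀.ne', hu, add_div, div_self hx₀.ne']
    unfold stirlingExponent
    rw [hlog, hu]
    field_simp
    ring
  have hrem := abs_log_one_add_sub_le hu_half
  have hsq : |u| ^ 2 ≤ t ^ 2 / x := by
    rw [hu_abs, div_pow, sq_abs]
    exact div_le_div_of_nonneg_left (sq_nonneg t) hx₀ (by nlinarith)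
  have hcube : 3 * x ^ 2 * (2 * |u| ^ 3) = 6 * |t| ^ 3 / x := by
    rw [hu_abs]
    field_simp
    ring
  rw [hexpand]
  calc |u - u ^ 2 / 2 + (2 * x ^ 2 + 1) * (log (1 + u) - (u - u ^ 2 / 2))|
      ≤ |u| + |u| ^ 2 + 3 * x ^ 2 * (2 * |u| ^ 3) := by
        refine (abs_add_le _ _).trans (add_le_add ((abs_sub _ _).trans ?_) ?_)
        · rw [abs_div, abs_pow, abs_two]
          nlinarith [sq_nonneg |u|]
        · rw [abs_mul, abs_of_pos (by positivity)]
          gcongr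
          nlinarith
    _ ≤ (|t| + t ^ 2 + 6 * |t| ^ 3) / x := by
        rw [hcube, add_div, add_div, ← hu_abs]
        linarith

theorem tendsto_stirlingExponent_add (t : ℝ) :
    Tendsto (fun x ↦ stirlingExponent x (x + t)) atTop (𝓝 (-2 * t ^ 2)) := by
  have hsmall : Tendsto (fun x ↦ stirlingExponent x (x + t) + 2 * t ^ 2) atTop (𝓝 0) :=
    squeeze_zero_norm' (eventually_atTop.2 ⟨max 1 (2 * |t|), fun x hx ↦
      abs_stirlingExponent_add_le (le_of_max_le_left hx) (le_of_max_le_right hx)⟩)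
      (tendsto_const_nhds.div_atTop tendsto_id)
  convert hsmall.sub_const (2 * t ^ 2) using 2 <;> ring

theorem exp_stirlingExponent_add_le {x t : ℝ} (hx : 1 ≤ x) (hxt : 0 < x + t) :
    exp (stirlingExponent x (x + t)) ≤ exp (-2 * t ^ 2) + exp (t - t ^ 2) := by
  rcases le_total t 0 with ht | ht
  · have hle := stirlingExponent_le_of_le (x := x) hxt (by linarith)
    rw [show x - (x + t) = -t by ring, neg_sq] at hle
    exact (exp_le_exp.2 hle).trans (le_add_of_nonneg_right (exp_pos _).le)
  · have hle := stirlingExponent_le_of_ge (y := x + t) hx (by linarith)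
    rw [add_sub_cancel_left] at hle
    exact (exp_le_exp.2 hle).trans (le_add_of_nonneg_left (exp_pos _).le)

theorem abs_exp_stirlingExponent_add_sub_le {x t : ℝ} (hx : 1 ≤ x) (hxt : 0 < x + t) :
    |exp (stirlingExponent x (x + t)) - exp (-2 * t ^ 2)|
      ≤ 2 * exp (-2 * t ^ 2) + exp (t - t ^ 2) := by
  have hle := exp_stirlingExponent_add_le hx hxt
  rw [abs_sub_le_iff]
  constructor <;> linarith [exp_pos (stirlingExponent x (x + t)), exp_pos (-2 * t ^ 2),
    exp_pos (t - t ^ 2)]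

theorem integrable_exp_sub_sq : Integrable (fun t : ℝ ↦ exp (t - t ^ 2)) := by
  have hsq : (fun t : ℝ ↦ exp (t - t ^ 2)) = fun t ↦ exp (1 / 4) * exp (-1 * (t - 1 / 2) ^ 2) := by
    ext t
    rw [← exp_add]
    ring_nf
  rw [hsq]
  exact ((integrable_exp_neg_mul_sq one_pos).comp_sub_right (1 / 2)).const_mul _

theorem tendsto_integral_abs_exp_stirlingExponent_sub :
    Tendsto (fun x ↦ ∫ y in Ioi 0, |exp (stirlingExponent x y) - exp (-2 * (x - y) ^ 2)|)
      atTop (𝓝 0) := by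
  set f : ℝ → ℝ → ℝ := fun x y ↦ |exp (stirlingExponent x y) - exp (-2 * (x - y) ^ 2)|
  have hshift : ∀ x, ∫ y in Ioi 0, f x y = ∫ t, (Ioi 0).indicator (f x) (x + t) := fun x ↦ by
    rw [← integral_indicator measurableSet_Ioi, integral_add_left_eq_self]
  change Tendsto (fun x ↦ ∫ y in Ioi 0, f x y) atTop (𝓝 0)
  set g : ℝ → ℝ → ℝ := fun x t ↦ (Ioi 0).indicator (f x) (x + t)
  have hmeas : ∀ᶠ x in atTop, AEStronglyMeasurable (g x) := .of_forall fun x ↦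
    ((Measurable.indicator (by simp only [f, stirlingExponent]; fun_prop) measurableSet_Ioi).comp
      (measurable_const_add x)).aestronglyMeasurable
  have hbound : ∀ᶠ x in atTop, ∀ᵐ t, ‖g x t‖ ≤ 2 * exp (-2 * t ^ 2) + exp (t - t ^ 2) := by
    filter_upwards [eventually_ge_atTop 1] with x hx
    refine ae_of_all _ fun t ↦ ?_
    simp only [g]
    by_cases hxt : 0 < x + t
    · rw [indicator_of_mem (show x + t ∈ Ioi 0 from hxt), norm_abs_eq_norm, norm_eq_abs,
        show x - (x + t) = -t by ring, neg_sq]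
      exact abs_exp_stirlingExponent_add_sub_le hx hxt
    · rw [indicator_of_notMem (show x + t ∉ Ioi 0 from hxt), norm_zero]
      positivity
  have hint : Integrable fun t : ℝ ↦ 2 * exp (-2 * t ^ 2) + exp (t - t ^ 2) :=
    ((integrable_exp_neg_mul_sq two_pos).const_mul 2).add integrable_exp_sub_sq
  have hlim : ∀ᵐ t, Tendsto (fun x ↦ g x t) atTop (𝓝 0) := by
    refine ae_of_all _ fun t ↦ ?_
    have hexp := (((continuous_exp.tendsto _).comp (tendsto_stirlingExponent_add t)).sub_const
      (exp (-2 * t ^ 2))).abs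
    rw [sub_self, abs_zero] at hexp
    refine hexp.congr' ?_
    filter_upwards [eventually_gt_atTop (-t)] with x hx
    simp only [g, indicator_of_mem (show x + t ∈ Ioi 0 by simp; linarith), f, Function.comp,
      show x - (x + t) = -t by ring, neg_sq]
  simpa only [hshift, integral_zero] using
    tendsto_integral_filter_of_dominated_convergence (f := fun _ ↦ 0) _ hmeas hbound hint hlim

theorem stmt_14
    (F : ℝ → ℝ → ℝ)
    (hF : ∀ x y : ℝ, 0 < x → 0 < y →
      F x y = Real.exp ((2 * x ^ 2 + 1) * (Real.log y - Real.log x) + x ^ 2 - y ^ 2)) :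
    Filter.Tendsto
      (fun x : ℝ => ∫ y in Set.Ioi (0 : ℝ), |F x y - Real.exp (-2 * (x - y) ^ 2)|)
      Filter.atTop (nhds 0) := by
  refine tendsto_integral_abs_exp_stirlingExponent_sub.congr' ?_
  filter_upwards [eventually_gt_atTop 0] with x hx
  refine setIntegral_congr_fun measurableSet_Ioi fun y hy ↦ ?_
  rw [hF x y hx hy, stirlingExponent]
end
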